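/- arXiv:1804.05803 — 6 statements merged into one kernel-verified Lean document; each statement's English description precedes it below -/
import Mathlib

section
/- Let 0 < l < u < 1 and let w0, w1, c1, d1 ∈ ℝ. Define q(x) = w0 + c1·x + d1·x². Assume that for every x ∈ [l,u], max{0, (q(x) − x)/(1 − x)} ≤ w0 + w1·x and w0 + w1·x ≤ min{1, q(x)/(1 − x)}. Then wl ≤ w1 ≤ wu, where wl = max over x ∈ {l,u} of max{ −w0/x, (w0 + c1 + d1 − 1)/(1 − x) − d1 } and wu = min over x ∈ {l,u} of min{ (1 − w0)/x, (w0 + c1 + d1)/(1 − x) − d1 }. -/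
lemma aux_stmt1 (x w0 w1 c1 d1 : ℝ) (hx : 0 < x) (hx1 : x < 1)
    (h1 : max 0 (((w0 + c1 * x + d1 * x ^ 2) - x) / (1 - x)) ≤ w0 + w1 * x)
    (h2 : w0 + w1 * x ≤ min 1 ((w0 + c1 * x + d1 * x ^ 2) / (1 - x))) :
    (-w0 / x ≤ w1 ∧ (w0 + c1 + d1 - 1) / (1 - x) - d1 ≤ w1) ∧
    (w1 ≤ (1 - w0) / x ∧ w1 ≤ (w0 + c1 + d1) / (1 - x) - d1) := by
  have h1x : (0:ℝ) < 1 - x := by linarith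
  have ha : (0:ℝ) ≤ w0 + w1 * x := le_trans (le_max_left _ _) h1
  have hb : ((w0 + c1 * x + d1 * x ^ 2) - x) / (1 - x) ≤ w0 + w1 * x :=
    le_trans (le_max_right _ _) h1
  have hc : w0 + w1 * x ≤ 1 := le_trans h2 (min_le_left _ _)
  have hd : w0 + w1 * x ≤ (w0 + c1 * x + d1 * x ^ 2) / (1 - x) :=
    le_trans h2 (min_le_right _ _)
  have hb' : (w0 + c1 * x + d1 * x ^ 2) - x ≤ (w0 + w1 * x) * (1 - x) :=
    (div_le_iff₀ h1x).mp hb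
  have hd' : (w0 + w1 * x) * (1 - x) ≤ w0 + c1 * x + d1 * x ^ 2 :=
    (le_div_iff₀ h1x).mp hd
  refine ⟨⟨?_, ?_⟩, ?_, ?_⟩
  · rw [div_le_iff₀ hx]; nlinarith
  · rw [sub_le_iff_le_add, div_le_iff₀ h1x]; nlinarith
  · rw [le_div_iff₀ hx]; nlinarith
  · rw [le_sub_iff_add_le, le_div_iff₀ h1x]; nlinarith

theorem stmt_1 (l u w0 w1 c1 d1 : ℝ) (hl : 0 < l) (hlu : l < u) (hu : u < 1)
    (h : ∀ x ∈ Set.Icc l u,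
      max 0 (((w0 + c1 * x + d1 * x ^ 2) - x) / (1 - x)) ≤ w0 + w1 * x ∧
      w0 + w1 * x ≤ min 1 ((w0 + c1 * x + d1 * x ^ 2) / (1 - x))) :
    max (max (-w0 / l) ((w0 + c1 + d1 - 1) / (1 - l) - d1))
        (max (-w0 / u) ((w0 + c1 + d1 - 1) / (1 - u) - d1)) ≤ w1 ∧
    w1 ≤ min (min ((1 - w0) / l) ((w0 + c1 + d1) / (1 - l) - d1))
             (min ((1 - w0) / u) ((w0 + c1 + d1) / (1 - u) - d1)) := by
  obtain ⟨hl1, hl2⟩ := h l ⟨le_refl l, le_of_lt hlu⟩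
  obtain ⟨hu1, hu2⟩ := h u ⟨le_of_lt hlu, le_refl u⟩
  obtain ⟨⟨a1, a2⟩, a3, a4⟩ :=
    aux_stmt1 l w0 w1 c1 d1 hl (lt_trans hlu hu) hl1 hl2
  obtain ⟨⟨b1, b2⟩, b3, b4⟩ :=
    aux_stmt1 u w0 w1 c1 d1 (lt_trans hl hlu) hu hu1 hu2
  exact ⟨max_le (max_le a1 a2) (max_le b1 b2),
    le_min (le_min a3 a4) (le_min b3 b4)⟩
end

section
/- Let w0, w1, c1, d1 ∈ ℝ and define q(x) = w0 + c1·x + d1·x². Assume that for every x ∈ (0,1), max{0, (q(x) − x)/(1 − x)} ≤ w0 + w1·x and w0 + w1·x ≤ min{1, q(x)/(1 − x)}. Then max{ −w0, c1 + w0 − 1 } ≤ w1 ≤ min{ 1 − w0, c1 + w0 }. -/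
open Filter Set

private lemma aux0 (a b : ℝ) (h : ∀ x ∈ Set.Ioo (0:ℝ) 1, 0 ≤ a + b * x) : 0 ≤ a := by
  have ht : Tendsto (fun x : ℝ => a + b * x) (nhdsWithin 0 (Set.Ioi 0)) (nhds (a + b * 0)) :=
    ((continuous_const.add (continuous_const.mul continuous_id)).continuousAt).tendsto.mono_left
      nhdsWithin_le_nhds
  have hmem : Set.Ioo (0:ℝ) 1 ∈ nhdsWithin (0:ℝ) (Set.Ioi 0) :=
    Ioo_mem_nhdsGT_of_mem ⟨le_refl 0, one_pos⟩
  have := ge_of_tendsto ht (Filter.eventually_of_mem hmem h)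
  simpa using this

private lemma aux1 (a b : ℝ) (h : ∀ x ∈ Set.Ioo (0:ℝ) 1, 0 ≤ a + b * x) : 0 ≤ a + b := by
  have ht : Tendsto (fun x : ℝ => a + b * x) (nhdsWithin 1 (Set.Iio 1)) (nhds (a + b * 1)) :=
    ((continuous_const.add (continuous_const.mul continuous_id)).continuousAt).tendsto.mono_left
      nhdsWithin_le_nhds
  have hmem : Set.Ioo (0:ℝ) 1 ∈ nhdsWithin (1:ℝ) (Set.Iio 1) :=
    Ioo_mem_nhdsLT_of_mem ⟨one_pos, le_refl 1⟩
  have := ge_of_tendsto ht (Filter.eventually_of_mem hmem h)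
  simpa using this

theorem stmt_2 (w0 w1 c1 d1 : ℝ)
    (h : ∀ x ∈ Set.Ioo (0:ℝ) 1,
      max 0 (((w0 + c1 * x + d1 * x ^ 2) - x) / (1 - x)) ≤ w0 + w1 * x ∧
      w0 + w1 * x ≤ min 1 ((w0 + c1 * x + d1 * x ^ 2) / (1 - x))) :
    max (-w0) (c1 + w0 - 1) ≤ w1 ∧ w1 ≤ min (1 - w0) (c1 + w0) := by
  -- 0 ≤ w0 + w1 x on (0,1) implies 0 ≤ w0 + w1
  have h1 : 0 ≤ w0 + w1 := aux1 w0 w1 (fun x hx => le_trans (le_max_left _ _) (h x hx).1)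
  -- w0 + w1 x ≤ 1 on (0,1) implies w0 + w1 ≤ 1
  have h2 : 0 ≤ (1 - w0) + (-w1) := aux1 (1 - w0) (-w1) (fun x hx => by
    have := le_trans (h x hx).2 (min_le_left _ _); linarith)
  -- from (q-x)/(1-x) ≤ w0+w1 x
  have h3 : 0 ≤ w1 - w0 - c1 + 1 := by
    refine aux0 _ (-(w1 + d1)) (fun x hx => ?_)
    obtain ⟨hx0, hx1⟩ := hx
    have hq := le_trans (le_max_right _ _) (h x ⟨hx0, hx1⟩).1
    have h1x : (0:ℝ) < 1 - x := by linarith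
    rw [div_le_iff₀ h1x] at hq
    have key : 0 ≤ x * ((w1 - w0 - c1 + 1) + (-(w1 + d1)) * x) := by nlinarith
    nlinarith
  -- from w0+w1 x ≤ q/(1-x)
  have h4 : 0 ≤ c1 + w0 - w1 := by
    refine aux0 _ (d1 + w1) (fun x hx => ?_)
    obtain ⟨hx0, hx1⟩ := hx
    have hq := le_trans (h x ⟨hx0, hx1⟩).2 (min_le_right _ _)
    have h1x : (0:ℝ) < 1 - x := by linarith
    rw [le_div_iff₀ h1x] at hq
    have key : 0 ≤ x * ((c1 + w0 - w1) + (d1 + w1) * x) := by nlinarith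
    nlinarith
  constructor
  · exact max_le (by linarith) (by linarith)
  · exact le_min (by linarith) (by linarith)
end

section
/- Let (Ω, 𝒜, μ) be a probability space and X, β^b, β^w : Ω → ℝ be 𝒜-measurable with 0 ≤ X ≤ 1, 0 ≤ β^b ≤ 1 and 0 ≤ β^w ≤ 1 almost everywhere. Let T = X·β^b + (1 − X)·β^w and let m ≤ 𝒜 be the σ-algebra generated by X. If μ[β^w | m] = w0 + w1·X almost everywhere and μ[β^b | m] = b0 + b1·X almost everywhere for real constants w0, w1, b0, b1, then μ[T | m] = w0 + (b0 − w0 + w1)·X + (b1 − w1)·X² almost everywhere. -/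
/-! Pulling the bounded `σ(X)`-measurable weights `X` and `1 - X` out of the conditional
expectation gives `E(T | X) = X · E(βᵇ | X) + (1 - X) · E(βʷ | X)`; substituting the two linear
models and expanding yields the quadratic in `X`. -/

open MeasureTheory

section

variable {Ω : Type*} {m m0 : MeasurableSpace Ω} {μ : Measure Ω}

theorem condExp_mul_of_stronglyMeasurable_left_of_bdd {f g : Ω → ℝ} {c : ℝ} (hm : m ≤ m0)
    (hf : StronglyMeasurable[m] f) (hfc : ∀ᵐ ω ∂μ, ‖f ω‖ ≤ c) (hg : Integrable g μ) :
    μ[f * g|m] =ᵐ[μ] f * μ[g|m] :=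
  condExp_mul_of_stronglyMeasurable_left hf
    (hg.bdd_mul (hf.mono hm).aestronglyMeasurable hfc) hg

theorem condExp_mul_add_one_sub_mul {g f₁ f₂ : Ω → ℝ} {c : ℝ} (hm : m ≤ m0)
    (hg : StronglyMeasurable[m] g) (hgc : ∀ᵐ ω ∂μ, ‖g ω‖ ≤ c)
    (hf₁ : Integrable f₁ μ) (hf₂ : Integrable f₂ μ) :
    μ[fun ω => g ω * f₁ ω + (1 - g ω) * f₂ ω|m]
      =ᵐ[μ] fun ω => g ω * μ[f₁|m] ω + (1 - g ω) * μ[f₂|m] ω := by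
  have h1g : StronglyMeasurable[m] (1 - g) := stronglyMeasurable_const.sub hg
  have h1gc : ∀ᵐ ω ∂μ, ‖(1 - g) ω‖ ≤ 1 + c := by
    filter_upwards [hgc] with ω hω
    calc ‖1 - g ω‖ ≤ ‖(1 : ℝ)‖ + ‖g ω‖ := norm_sub_le _ _
      _ ≤ 1 + c := by rw [norm_one]; linarith
  have hint₁ : Integrable (g * f₁) μ := hf₁.bdd_mul (hg.mono hm).aestronglyMeasurable hgc
  have hint₂ : Integrable ((1 - g) * f₂) μ := hf₂.bdd_mul (h1g.mono hm).aestronglyMeasurable h1gc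
  calc μ[g * f₁ + (1 - g) * f₂|m] =ᵐ[μ] μ[g * f₁|m] + μ[(1 - g) * f₂|m] :=
        condExp_add hint₁ hint₂ m
    _ =ᵐ[μ] g * μ[f₁|m] + (1 - g) * μ[f₂|m] :=
        (condExp_mul_of_stronglyMeasurable_left_of_bdd hm hg hgc hf₁).add
          (condExp_mul_of_stronglyMeasurable_left_of_bdd hm h1g h1gc hf₂)

end

theorem stmt_3 {Ω : Type*} [m0 : MeasurableSpace Ω] (μ : Measure Ω)
    [IsProbabilityMeasure μ]
    (X βb βw : Ω → ℝ) (hX : Measurable X) (hβb : Measurable βb) (hβw : Measurable βw)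
    (hX01 : ∀ᵐ ω ∂μ, X ω ∈ Set.Icc (0:ℝ) 1)
    (hβb01 : ∀ᵐ ω ∂μ, βb ω ∈ Set.Icc (0:ℝ) 1)
    (hβw01 : ∀ᵐ ω ∂μ, βw ω ∈ Set.Icc (0:ℝ) 1)
    (T : Ω → ℝ) (hT : T = fun ω => X ω * βb ω + (1 - X ω) * βw ω)
    (m : MeasurableSpace Ω) (hm : m = MeasurableSpace.comap X Real.measurableSpace)
    (w0 w1 b0 b1 : ℝ)
    (hw : μ[βw|m] =ᵐ[μ] fun ω => w0 + w1 * X ω)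
    (hb : μ[βb|m] =ᵐ[μ] fun ω => b0 + b1 * X ω) :
    μ[T|m] =ᵐ[μ] fun ω => w0 + (b0 - w0 + w1) * X ω + (b1 - w1) * X ω ^ 2 := by
  subst hT hm
  have hXbdd : ∀ᵐ ω ∂μ, ‖X ω‖ ≤ 1 := by
    filter_upwards [hX01] with ω hω
    rw [Real.norm_eq_abs, abs_le]
    exact ⟨by linarith [hω.1], hω.2⟩
  have hmix := condExp_mul_add_one_sub_mul hX.comap_le (comap_measurable X).stronglyMeasurable
    hXbdd (Integrable.of_mem_Icc 0 1 hβb.aemeasurable hβb01)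
    (Integrable.of_mem_Icc 0 1 hβw.aemeasurable hβw01)
  filter_upwards [hmix, hb, hw] with ω hω hbω hwω
  rw [hω, hbω, hwω]
  ring
end

section
/- Let (Ω, 𝒜, μ) be a probability space and X, N, β^b, β^w : Ω → ℝ be 𝒜-measurable with 0 ≤ X ≤ 1, 0 ≤ β^b ≤ 1, 0 ≤ β^w ≤ 1 almost everywhere and N bounded and nonnegative almost everywhere. Let T = X·β^b + (1 − X)·β^w, let m ≤ 𝒜 be the σ-algebra generated by (X, N), and assume μ[β^w | m] = w0 + w1·X and μ[β^b | m] = b0 + b1·X almost everywhere. Set c1 = b0 − w0 + w1, d1 = b1 − w1, and assume ∫ N·X dμ > 0. Define B = (∫ N·X·β^b dμ)/(∫ N·X dμ), r = (∫ N·X·(1 − X) dμ)/(∫ N·X dμ), and for v ∈ ℝ, B(v) = (∫ N·X·((w0 + c1 + d1·X) + v·(X − 1)) dμ)/(∫ N·X dμ). Then: (i) B(v) = B + (w1 − v)·r for every v ∈ ℝ; (ii) (∫ N·max{0, T − (1 − X)} dμ)/(∫ N·X dμ) ≤ B ≤ (∫ N·min{T, X} dμ)/(∫ N·X dμ); and (iii)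 for any reals wl ≤ w1 ≤ wu, one has B(wu) ≤ B ≤ B(wl), so B lies in the intersection of [B(wu), B(wl)] with the Duncan–Davis interval in (ii); in particular that intersection is nonempty. -/
open MeasureTheory

private lemma int_of_bdd {Ω : Type*} {mΩ : MeasurableSpace Ω} {μ : Measure Ω}
    [IsFiniteMeasure μ] {g : Ω → ℝ} (hg : Measurable g) (K : ℝ)
    (h : ∀ᵐ ω ∂μ, |g ω| ≤ K) : Integrable g μ :=
  (integrable_const K).mono' hg.aestronglyMeasurable h

private lemma abs_mul_le' {n a c K : ℝ} (hn : 0 ≤ n) (hc : n ≤ c) (ha : |a| ≤ K) :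
    |n * a| ≤ c * K := by
  rw [abs_mul, abs_of_nonneg hn]
  exact mul_le_mul hc ha (abs_nonneg a) (le_trans hn hc)

theorem stmt_9 {Ω : Type*} [m0 : MeasurableSpace Ω] (μ : Measure Ω)
    [IsProbabilityMeasure μ]
    (X N βb βw : Ω → ℝ) (hX : Measurable X) (hN : Measurable N)
    (hβb : Measurable βb) (hβw : Measurable βw)
    (hX01 : ∀ᵐ ω ∂μ, X ω ∈ Set.Icc (0:ℝ) 1)
    (hβb01 : ∀ᵐ ω ∂μ, βb ω ∈ Set.Icc (0:ℝ) 1)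
    (hβw01 : ∀ᵐ ω ∂μ, βw ω ∈ Set.Icc (0:ℝ) 1)
    (hN0 : ∀ᵐ ω ∂μ, 0 ≤ N ω) (C : ℝ) (hNC : ∀ᵐ ω ∂μ, N ω ≤ C)
    (T : Ω → ℝ) (hT : T = fun ω => X ω * βb ω + (1 - X ω) * βw ω)
    (m : MeasurableSpace Ω)
    (hm : m = MeasurableSpace.comap (fun ω => (X ω, N ω)) inferInstance)
    (w0 w1 b0 b1 : ℝ)
    (hw : μ[βw|m] =ᵐ[μ] fun ω => w0 + w1 * X ω)
    (hb : μ[βb|m] =ᵐ[μ] fun ω => b0 + b1 * X ω)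
    (c1 d1 : ℝ) (hc1 : c1 = b0 - w0 + w1) (hd1 : d1 = b1 - w1)
    (hpos : 0 < ∫ ω, N ω * X ω ∂μ)
    (B r DDl DDu : ℝ)
    (hB : B = (∫ ω, N ω * X ω * βb ω ∂μ) / (∫ ω, N ω * X ω ∂μ))
    (hr : r = (∫ ω, N ω * X ω * (1 - X ω) ∂μ) / (∫ ω, N ω * X ω ∂μ))
    (hDDl : DDl = (∫ ω, N ω * max 0 (T ω - (1 - X ω)) ∂μ) / (∫ ω, N ω * X ω ∂μ))
    (hDDu : DDu = (∫ ω, N ω * min (T ω) (X ω) ∂μ) / (∫ ω, N ω * X ω ∂μ)) :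
    (∀ v : ℝ,
      (∫ ω, N ω * X ω * ((w0 + c1 + d1 * X ω) + v * (X ω - 1)) ∂μ) /
          (∫ ω, N ω * X ω ∂μ) = B + (w1 - v) * r) ∧
    (DDl ≤ B ∧ B ≤ DDu) ∧
    (∀ wl wu : ℝ, wl ≤ w1 → w1 ≤ wu →
      B ∈ Set.Icc
            ((∫ ω, N ω * X ω * ((w0 + c1 + d1 * X ω) + wu * (X ω - 1)) ∂μ) /
              (∫ ω, N ω * X ω ∂μ))
            ((∫ ω, N ω * X ω * ((w0 + c1 + d1 * X ω) + wl * (X ω - 1)) ∂μ) /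
              (∫ ω, N ω * X ω ∂μ)) ∩ Set.Icc DDl DDu ∧
      (Set.Icc
            ((∫ ω, N ω * X ω * ((w0 + c1 + d1 * X ω) + wu * (X ω - 1)) ∂μ) /
              (∫ ω, N ω * X ω ∂μ))
            ((∫ ω, N ω * X ω * ((w0 + c1 + d1 * X ω) + wl * (X ω - 1)) ∂μ) /
              (∫ ω, N ω * X ω ∂μ)) ∩ Set.Icc DDl DDu).Nonempty) := by
  subst hT hc1 hd1
  have hmle : m ≤ m0 := by
    rw [hm]; exact (hX.prodMk hN).comap_le
  haveI : SigmaFinite (μ.trim hmle) := by infer_instance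
  have hfm : StronglyMeasurable[m] (fun ω => N ω * X ω) := by
    have hpair : Measurable[m] (fun ω => (X ω, N ω)) := by
      rw [hm]; exact Measurable.of_comap_le le_rfl
    exact ((measurable_snd.mul measurable_fst).comp hpair).stronglyMeasurable
  -- integrabilities
  have hiNX : Integrable (fun ω => N ω * X ω) μ := by
    refine int_of_bdd (hN.mul hX) (C * 1) ?_
    filter_upwards [hX01, hN0, hNC] with ω h1 h2 h3
    exact abs_mul_le' h2 h3 (abs_le.mpr ⟨by linarith [h1.1], h1.2⟩)
  have hiNXb : Integrable (fun ω => N ω * X ω * βb ω) μ := by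
    refine int_of_bdd ((hN.mul hX).mul hβb) (C * 1) ?_
    filter_upwards [hX01, hβb01, hN0, hNC] with ω h1 h2 h3 h4
    rw [mul_assoc]
    refine abs_mul_le' h3 h4 (abs_le.mpr ⟨?_, ?_⟩)
    · nlinarith [h1.1, h2.1]
    · nlinarith [h1.1, h1.2, h2.1, h2.2]
  have hib : Integrable βb μ := by
    refine int_of_bdd hβb 1 ?_
    filter_upwards [hβb01] with ω h1
    exact abs_le.mpr ⟨by linarith [h1.1], h1.2⟩
  have hiNX1X : Integrable (fun ω => N ω * X ω * (1 - X ω)) μ := by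
    refine int_of_bdd ((hN.mul hX).mul (measurable_const.sub hX)) (C * 1) ?_
    filter_upwards [hX01, hN0, hNC] with ω h1 h2 h3
    rw [mul_assoc]
    refine abs_mul_le' h2 h3 (abs_le.mpr ⟨?_, ?_⟩)
    · nlinarith [h1.1, h1.2]
    · nlinarith [h1.1, h1.2]
  have hiNXbb : Integrable (fun ω => N ω * X ω * (b0 + b1 * X ω)) μ := by
    refine int_of_bdd ((hN.mul hX).mul (measurable_const.add (measurable_const.mul hX)))
      (C * (|b0| + |b1|)) ?_
    filter_upwards [hX01, hN0, hNC] with ω h1 h2 h3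
    rw [mul_assoc]
    refine abs_mul_le' h2 h3 ?_
    have hXa : |X ω| ≤ 1 := abs_le.mpr ⟨by linarith [h1.1], h1.2⟩
    calc |X ω * (b0 + b1 * X ω)| ≤ |b0 + b1 * X ω| := by
          rw [abs_mul]
          nlinarith [abs_nonneg (b0 + b1 * X ω)]
      _ ≤ |b0| + |b1 * X ω| := abs_add_le _ _
      _ ≤ |b0| + |b1| := by
          rw [abs_mul]
          nlinarith [abs_nonneg b1]
  -- conditional expectation step: ∫ N X βb = ∫ N X (b0 + b1 X)
  have hce : ∫ ω, N ω * X ω * βb ω ∂μ = ∫ ω, N ω * X ω * (b0 + b1 * X ω) ∂μ := by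
    have h1 : μ[(fun ω => N ω * X ω) * βb|m] =ᵐ[μ] (fun ω => N ω * X ω) * μ[βb|m] :=
      condExp_mul_of_stronglyMeasurable_left hfm hiNXb hib
    calc ∫ ω, N ω * X ω * βb ω ∂μ
        = ∫ ω, ((fun ω => N ω * X ω) * βb) ω ∂μ := rfl
      _ = ∫ ω, (μ[(fun ω => N ω * X ω) * βb|m]) ω ∂μ := (integral_condExp hmle).symm
      _ = ∫ ω, N ω * X ω * (b0 + b1 * X ω) ∂μ := by
          refine integral_congr_ae ?_
          filter_upwards [h1, hb] with ω h1 h2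
          simp only [Pi.mul_apply] at h1 ⊢
          rw [h1, h2]
  -- key identity (i)
  have key : ∀ v : ℝ, ∫ ω, N ω * X ω * ((w0 + (b0 - w0 + w1) + (b1 - w1) * X ω) + v * (X ω - 1)) ∂μ
      = (∫ ω, N ω * X ω * βb ω ∂μ) + (w1 - v) * ∫ ω, N ω * X ω * (1 - X ω) ∂μ := by
    intro v
    have heq : (fun ω => N ω * X ω * ((w0 + (b0 - w0 + w1) + (b1 - w1) * X ω) + v * (X ω - 1)))
        = fun ω => N ω * X ω * (b0 + b1 * X ω) + (w1 - v) * (N ω * X ω * (1 - X ω)) := by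
      funext ω; ring
    rw [heq, integral_add hiNXbb (hiNX1X.const_mul _), integral_const_mul, hce]
  have keyB : ∀ v : ℝ,
      (∫ ω, N ω * X ω * ((w0 + (b0 - w0 + w1) + (b1 - w1) * X ω) + v * (X ω - 1)) ∂μ) /
        (∫ ω, N ω * X ω ∂μ) = B + (w1 - v) * r := by
    intro v
    rw [key v, hB, hr, add_div, mul_div_assoc]
  -- r ≥ 0
  have hr0 : 0 ≤ r := by
    rw [hr]
    apply div_nonneg _ hpos.le
    apply integral_nonneg_of_ae
    filter_upwards [hX01, hN0] with ω h1 h2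
    show (0:ℝ) ≤ N ω * X ω * (1 - X ω)
    exact mul_nonneg (mul_nonneg h2 h1.1) (by linarith [h1.2])
  -- part (ii)
  have hDD : DDl ≤ B ∧ B ≤ DDu := by
    constructor
    · rw [hDDl, hB]
      apply (div_le_div_iff_of_pos_right hpos).mpr
      refine integral_mono_ae ?_ hiNXb ?_
      · refine int_of_bdd (hN.mul (measurable_const.max
          (((hX.mul hβb).add ((measurable_const.sub hX).mul hβw)).sub
            (measurable_const.sub hX)))) (C * 1) ?_
        filter_upwards [hX01, hβb01, hβw01, hN0, hNC] with ω h1 h2 h3 h4 h5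
        refine abs_mul_le' h4 h5 (abs_le.mpr ⟨?_, ?_⟩)
        · have := le_max_left (0:ℝ) (X ω * βb ω + (1 - X ω) * βw ω - (1 - X ω))
          linarith
        · apply max_le (by norm_num)
          nlinarith [h1.1, h1.2, h2.1, h2.2, h3.1, h3.2]
      · filter_upwards [hX01, hβb01, hβw01, hN0] with ω h1 h2 h3 h4
        have hle : max 0 (X ω * βb ω + (1 - X ω) * βw ω - (1 - X ω)) ≤ X ω * βb ω := by
          apply max_le (by nlinarith [h1.1, h1.2, h2.1])
          nlinarith [h1.2, h3.2, h1.1]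
        calc N ω * max 0 (X ω * βb ω + (1 - X ω) * βw ω - (1 - X ω))
            ≤ N ω * (X ω * βb ω) := mul_le_mul_of_nonneg_left hle h4
          _ = N ω * X ω * βb ω := (mul_assoc _ _ _).symm
    · rw [hDDu, hB]
      apply (div_le_div_iff_of_pos_right hpos).mpr
      refine integral_mono_ae hiNXb ?_ ?_
      · refine int_of_bdd (hN.mul (((hX.mul hβb).add
          ((measurable_const.sub hX).mul hβw)).min hX)) (C * 1) ?_
        filter_upwards [hX01, hβb01, hβw01, hN0, hNC] with ω h1 h2 h3 h4 h5
        refine abs_mul_le' h4 h5 (abs_le.mpr ⟨?_, ?_⟩)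
        · have := le_min (α := ℝ)
            (show (0:ℝ) ≤ X ω * βb ω + (1 - X ω) * βw ω by nlinarith [h1.1, h1.2, h2.1, h3.1])
            h1.1
          linarith
        · exact le_trans (min_le_right _ _) h1.2
      · filter_upwards [hX01, hβb01, hβw01, hN0] with ω h1 h2 h3 h4
        have hle : X ω * βb ω ≤ min (X ω * βb ω + (1 - X ω) * βw ω) (X ω) :=
          le_min (by nlinarith [h1.2, h3.1]) (by nlinarith [h1.1, h2.2])
        calc N ω * X ω * βb ω = N ω * (X ω * βb ω) := mul_assoc _ _ _
          _ ≤ N ω * min (X ω * βb ω + (1 - X ω) * βw ω) (X ω) :=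
            mul_le_mul_of_nonneg_left hle h4
  refine ⟨keyB, hDD, fun wl wu hwl hwu => ?_⟩
  have h1 : B + (w1 - wu) * r ≤ B := by nlinarith
  have h2 : B ≤ B + (w1 - wl) * r := by nlinarith
  have hmem : B ∈ Set.Icc
      ((∫ ω, N ω * X ω * ((w0 + (b0 - w0 + w1) + (b1 - w1) * X ω) + wu * (X ω - 1)) ∂μ) /
        (∫ ω, N ω * X ω ∂μ))
      ((∫ ω, N ω * X ω * ((w0 + (b0 - w0 + w1) + (b1 - w1) * X ω) + wl * (X ω - 1)) ∂μ) /
        (∫ ω, N ω * X ω ∂μ)) ∩ Set.Icc DDl DDu := by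
    refine ⟨⟨?_, ?_⟩, hDD.1, hDD.2⟩
    · rw [keyB wu]; exact h1
    · rw [keyB wl]; exact h2
  exact ⟨hmem, ⟨B, hmem⟩⟩
end

section
/- Let T ∈ (0,1) and set m = min{T, 1 − T}. Then T² ≤ T − m/3 and T + m/3 ≤ 2T − T²; moreover, if |τ| ≤ m then T + τ/3 ∈ [T − m/3, T + m/3]; and the width ratio (2m/3)/((2T − T²) − T²) equals 1/(3·max{T, 1 − T}) and lies in the half-open interval (1/3, 2/3]. -/
theorem stmt_15 (T : ℝ) (hT : T ∈ Set.Ioo (0:ℝ) 1) (m : ℝ) (hm : m = min T (1 - T)) :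
    T ^ 2 ≤ T - m / 3 ∧
    T + m / 3 ≤ 2 * T - T ^ 2 ∧
    (∀ τ : ℝ, |τ| ≤ m → T + τ / 3 ∈ Set.Icc (T - m / 3) (T + m / 3)) ∧
    (2 * m / 3) / ((2 * T - T ^ 2) - T ^ 2) = 1 / (3 * max T (1 - T)) ∧
    1 / (3 * max T (1 - T)) ∈ Set.Ioc (1 / 3 : ℝ) (2 / 3) := by
  obtain ⟨h0, h1⟩ := hT
  have hle : m ≤ T := hm ▸ min_le_left _ _
  have hle' : m ≤ 1 - T := hm ▸ min_le_right _ _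
  have hmpos : 0 < m := hm ▸ lt_min h0 (by linarith)
  have hmM : m * max T (1 - T) = T * (1 - T) := by
    rw [hm]; rcases le_total T (1 - T) with h | h
    · rw [min_eq_left h, max_eq_right h]
    · rw [min_eq_right h, max_eq_left h]; ring
  have hMpos : 0 < max T (1 - T) := lt_of_lt_of_le h0 (le_max_left _ _)
  refine ⟨by nlinarith, by nlinarith, ?_, ?_, ?_⟩
  · intro τ hτ
    rw [abs_le] at hτ
    exact ⟨by linarith [hτ.1], by linarith [hτ.2]⟩
  · rw [div_eq_div_iff (by nlinarith) (by positivity)]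
    nlinarith
  · constructor
    · rw [lt_div_iff₀ (by positivity)]
      have : max T (1 - T) < 1 := max_lt h1 (by linarith)
      linarith
    · rw [div_le_div_iff₀ (by positivity) (by norm_num)]
      have : (1:ℝ)/2 ≤ max T (1 - T) := by
        rcases le_total T (1 - T) with h | h
        · rw [max_eq_right h]; linarith
        · rw [max_eq_left h]; linarith
      linarith
end

section
/- Let T, b2 ∈ ℝ. Then: (i) for every x ∈ ℝ, x·(T + b2·(x² − 1)) + (1 − x)·(T + b2·(x² + x)) = T; (ii) (∫₀¹ x·(T + b2·(x² − 1)) dx)/(∫₀¹ x dx) = T − b2/2, where the integrals are Lebesgue integrals over the unit interval; and (iii) for T = b2 = 1/3, the value T − b2/2 = 1/6 does not belong to the interval [T − (1/3)·min{T, 1 − T}, T + (1/3)·min{T, 1 − T}] = [2/9, 4/9]. -/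
theorem quadratic_effects_accounting (T b2 x : ℝ) :
    x * (T + b2 * (x ^ 2 - 1)) + (1 - x) * (T + b2 * (x ^ 2 + x)) = T := by
  ring

theorem integral_mul_quadratic_effect (T b2 a b : ℝ) :
    ∫ x in a..b, x * (T + b2 * (x ^ 2 - 1))
      = b2 * (b ^ 4 - a ^ 4) / 4 + (T - b2) * (b ^ 2 - a ^ 2) / 2 := by
  have hexpand : (fun x : ℝ => x * (T + b2 * (x ^ 2 - 1)))
      = fun x => b2 * x ^ 3 + (T - b2) * x := by
    funext x
    ring
  rw [hexpand,
    intervalIntegral.integral_add ((by fun_prop : Continuous _).intervalIntegrable _ _)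
      ((by fun_prop : Continuous _).intervalIntegrable _ _),
    intervalIntegral.integral_const_mul, intervalIntegral.integral_const_mul,
    integral_pow, integral_id]
  ring

theorem stmt_18 (T b2 : ℝ) :
    (∀ x : ℝ, x * (T + b2 * (x ^ 2 - 1)) + (1 - x) * (T + b2 * (x ^ 2 + x)) = T) ∧
    (∫ x in (0:ℝ)..1, x * (T + b2 * (x ^ 2 - 1))) / (∫ x in (0:ℝ)..1, x)
      = T - b2 / 2 ∧
    (T = 1 / 3 → b2 = 1 / 3 →
      T - b2 / 2 = 1 / 6 ∧
      Set.Icc (T - (1 / 3) * min T (1 - T)) (T + (1 / 3) * min T (1 - T))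
        = Set.Icc (2 / 9 : ℝ) (4 / 9) ∧
      T - b2 / 2 ∉ Set.Icc (T - (1 / 3) * min T (1 - T)) (T + (1 / 3) * min T (1 - T))) := by
  refine ⟨quadratic_effects_accounting T b2, ?_, ?_⟩
  · rw [integral_mul_quadratic_effect, integral_id]
    ring
  · rintro rfl rfl
    norm_num
end
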